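/- arXiv:quant-ph/0304082 — 7 statements merged into one kernel-verified Lean document; each statement's English description precedes it below -/
import Mathlib

section
/- Let X_a = (1/5)[[3,-4,0],[4,3,0],[0,0,5]] and X_b = (1/5)[[5,0,0],[0,3,-4],[0,4,3]]. For any reduced product M of k matrices from {X_a, X_b, X_a^{-1}, X_b^{-1}}, the row vector (3,0,4)·M equals (x_1, x_2, x_3)/5^k with x_1, x_2, x_3 integers, and 5 divides x_2 if and only if k = 0. -/
open Matrix

def istep (p : Fin 2 × Bool) (x : Fin 3 → ℤ) : Fin 3 → ℤ :=
  if p.1 = 0 then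
    if p.2 then ![3*x 0 + 4*x 1, -4*x 0 + 3*x 1, 5*x 2]
    else ![3*x 0 - 4*x 1, 4*x 0 + 3*x 1, 5*x 2]
  else
    if p.2 then ![5*x 0, 3*x 1 + 4*x 2, -4*x 1 + 3*x 2]
    else ![5*x 0, 3*x 1 - 4*x 2, 4*x 1 + 3*x 2]

def irun : List (Fin 2 × Bool) → (Fin 3 → ℤ) → (Fin 3 → ℤ)
  | [], x => x
  | p :: l, x => irun l (istep p x)

def zstep (p : Fin 2 × Bool) (a b c : ZMod 5) : ZMod 5 × ZMod 5 × ZMod 5 :=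
  if p.1 = 0 then
    if p.2 then (3*a + 4*b, -4*a + 3*b, 5*c)
    else (3*a - 4*b, 4*a + 3*b, 5*c)
  else
    if p.2 then (5*a, 3*b + 4*c, -4*b + 3*c)
    else (5*a, 3*b - 4*c, 4*b + 3*c)

def invZ (p : Fin 2 × Bool) (a b c : ZMod 5) : Prop :=
  b ≠ 0 ∧
  if p.1 = 0 then
    (if p.2 then a = 3*b else a = 2*b) ∧ c = 0
  else
    a = 0 ∧ (if p.2 then c = 2*b else c = 3*b)

instance (p : Fin 2 × Bool) (a b c : ZMod 5) : Decidable (invZ p a b c) := by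
  unfold invZ; infer_instance

lemma zstep_key : ∀ (p q : Fin 2 × Bool), ¬(p.1 = q.1 ∧ p.2 ≠ q.2) →
    ∀ a b c : ZMod 5, invZ p a b c →
    invZ q (zstep q a b c).1 (zstep q a b c).2.1 (zstep q a b c).2.2 := by decide

lemma cast_istep (q : Fin 2 × Bool) (x : Fin 3 → ℤ) :
    ((istep q x 0 : ℤ) : ZMod 5) = (zstep q (x 0 : ℤ) (x 1 : ℤ) (x 2 : ℤ)).1 ∧
    ((istep q x 1 : ℤ) : ZMod 5) = (zstep q (x 0 : ℤ) (x 1 : ℤ) (x 2 : ℤ)).2.1 ∧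
    ((istep q x 2 : ℤ) : ZMod 5) = (zstep q (x 0 : ℤ) (x 1 : ℤ) (x 2 : ℤ)).2.2 := by
  rcases q with ⟨i, b⟩
  fin_cases i <;> cases b <;> simp [istep, zstep]

def inv' (p : Fin 2 × Bool) (x : Fin 3 → ℤ) : Prop :=
  invZ p ((x 0 : ℤ) : ZMod 5) ((x 1 : ℤ) : ZMod 5) ((x 2 : ℤ) : ZMod 5)

lemma inv'_step {p q : Fin 2 × Bool} {x : Fin 3 → ℤ}
    (h : inv' p x) (hc : ¬(p.1 = q.1 ∧ p.2 ≠ q.2)) : inv' q (istep q x) := by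
  unfold inv'
  obtain ⟨h0, h1, h2⟩ := cast_istep q x
  rw [h0, h1, h2]
  exact zstep_key p q hc _ _ _ h

lemma irun_inv : ∀ (l : List (Fin 2 × Bool)) (p : Fin 2 × Bool) (x : Fin 3 → ℤ),
    (p :: l).Chain' (fun p q => ¬(p.1 = q.1 ∧ p.2 ≠ q.2)) → inv' p x →
    ∃ q, inv' q (irun l x)
  | [], p, _, _, h => ⟨p, h⟩
  | r :: t, p, x, hch, h => by
    rw [List.Chain', List.isChain_cons_cons] at hch
    exact irun_inv t r (istep r x) hch.2 (inv'_step h hch.1)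

lemma base_inv (p : Fin 2 × Bool) : inv' p (istep p ![3, 0, 4]) := by
  have h := cast_istep p ![3, 0, 4]
  unfold inv'
  rw [h.1, h.2.1, h.2.2]
  revert p; decide

noncomputable def Mmat (q : Fin 2 × Bool) : Matrix (Fin 3) (Fin 3) ℝ :=
  if q.1 = 0 then
    if q.2 then (1/5 : ℝ) • !![3, -4, 0; 4, 3, 0; 0, 0, 5]
    else (1/5 : ℝ) • !![3, 4, 0; -4, 3, 0; 0, 0, 5]
  else
    if q.2 then (1/5 : ℝ) • !![5, 0, 0; 0, 3, -4; 0, 4, 3]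
    else (1/5 : ℝ) • !![5, 0, 0; 0, 3, 4; 0, -4, 3]

lemma inv_Xa : ((1/5 : ℝ) • !![3, -4, 0; 4, 3, 0; 0, 0, 5] : Matrix (Fin 3) (Fin 3) ℝ)⁻¹
    = (1/5 : ℝ) • !![3, 4, 0; -4, 3, 0; 0, 0, 5] := by
  apply inv_eq_right_inv
  ext i j
  fin_cases i <;> fin_cases j <;>
    simp [Matrix.mul_apply, Fin.sum_univ_three, Matrix.vecHead, Matrix.vecTail] <;> norm_num

lemma inv_Xb : ((1/5 : ℝ) • !![5, 0, 0; 0, 3, -4; 0, 4, 3] : Matrix (Fin 3) (Fin 3) ℝ)⁻¹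
    = (1/5 : ℝ) • !![5, 0, 0; 0, 3, 4; 0, -4, 3] := by
  apply inv_eq_right_inv
  ext i j
  fin_cases i <;> fin_cases j <;>
    simp [Matrix.mul_apply, Fin.sum_univ_three, Matrix.vecHead, Matrix.vecTail] <;> norm_num

lemma rstep (q : Fin 2 × Bool) (x : Fin 3 → ℤ) (m : ℕ) :
    vecMul (fun i => (x i : ℝ)/5^m) (Mmat q) = fun i => ((istep q x i : ℤ) : ℝ)/5^(m+1) := by
  rcases q with ⟨i, b⟩
  fin_cases i <;> cases b <;> funext j <;> fin_cases j <;>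
    simp [Mmat, istep, vecMul, dotProduct, Fin.sum_univ_three, Matrix.vecHead, Matrix.vecTail] <;>
    push_cast <;> field_simp <;> ring

lemma rrun : ∀ (l : List (Fin 2 × Bool)) (x : Fin 3 → ℤ) (m : ℕ),
    vecMul (fun i => (x i : ℝ)/5^m) ((l.map Mmat).prod)
      = fun i => ((irun l x i : ℤ) : ℝ)/5^(m + l.length)
  | [], x, m => by simp [irun]
  | q :: t, x, m => by
    simp only [List.map_cons, List.prod_cons, irun, List.length_cons, ← Matrix.vecMul_vecMul]
    rw [rstep q x m, rrun t (istep q x) (m+1), show m + 1 + t.length = m + (t.length + 1) by omega]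

/-- Generators indexed by `Fin 2 × Bool`: `(i, true)` is `X_i`, `(i, false)` is `X_i⁻¹`. -/
theorem reduced_product_vec :
    ∀ (Xa Xb : Matrix (Fin 3) (Fin 3) ℝ),
    Xa = (1/5 : ℝ) • !![3, -4, 0; 4, 3, 0; 0, 0, 5] →
    Xb = (1/5 : ℝ) • !![5, 0, 0; 0, 3, -4; 0, 4, 3] →
    ∀ (l : List (Fin 2 × Bool)),
      -- reduced: no two consecutive factors are inverses of each other
      l.Chain' (fun p q => ¬(p.1 = q.1 ∧ p.2 ≠ q.2)) →
      ∃ x : Fin 3 → ℤ,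
        Matrix.vecMul (![3, 0, 4] : Fin 3 → ℝ)
            ((l.map (fun p => if p.1 = 0 then (if p.2 then Xa else Xa⁻¹)
                              else (if p.2 then Xb else Xb⁻¹))).prod)
          = (fun i => (x i : ℝ) / 5 ^ l.length) ∧
        ((5 : ℤ) ∣ x 1 ↔ l.length = 0) := by
  intro Xa Xb hXa hXb l hl
  have hM : (fun p : Fin 2 × Bool => if p.1 = 0 then (if p.2 then Xa else Xa⁻¹)
      else (if p.2 then Xb else Xb⁻¹)) = Mmat := by
    funext p
    subst hXa hXb
    rcases p with ⟨i, b⟩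
    fin_cases i <;> cases b <;> simp only [inv_Xa, inv_Xb] <;> simp [Mmat]
  rw [hM]
  refine ⟨irun l ![3, 0, 4], ?_, ?_⟩
  · have hv : (![3, 0, 4] : Fin 3 → ℝ)
        = fun i => (((![3, 0, 4] : Fin 3 → ℤ) i : ℤ) : ℝ)/5^(0:ℕ) := by
      funext i; fin_cases i <;> simp
    rw [hv, rrun l ![3, 0, 4] 0]
    simp
  · cases l with
    | nil =>
      simp [irun]
    | cons p t =>
      obtain ⟨q, hq⟩ := irun_inv t p (istep p ![3, 0, 4]) hl (base_inv p)
      unfold inv' invZ at hq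
      obtain ⟨hb, -⟩ := hq
      rw [Ne, ZMod.intCast_zmod_eq_zero_iff_dvd] at hb
      simp only [List.length_cons, irun]
      constructor
      · intro hdvd
        exact absurd (by exact_mod_cast hdvd) hb
      · omega
end

section
/- Let X_a = (1/5)[[3,-4,0],[4,3,0],[0,0,5]] and X_b = (1/5)[[5,0,0],[0,3,-4],[0,4,3]], and let t = (3,0,4) be a row vector. For any two words u, v over the alphabet {a,b}, if t·X_u = t·X_v then u = v, where X_w denotes the product X_{w_1}···X_{w_n} for a word w = w_1···w_n. -/
/-!
Write `N w = t ⬝ (5 X)_w ∈ ℤ³`, so that `t ⬝ X_w = 5^(-|w|) • N w`. Modulo 5 both `5 X_a` and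
`5 X_b` have rank one, with images spanned by `(1,2,0)` and `(0,1,2)`, and neither of them kills
`(3,0,4)` or either image line. Hence `N w` mod 5 is a nonzero vector on the line of the last
letter of `w`. So `N w` is not divisible by 5, which lets one read `|w|` off `t ⬝ X_w`, and `N w`
determines the last letter of `w`, which can be cancelled because `det (5 X_c) ≠ 0`.
-/

open Matrix

theorem vecMul_list_prod_map_smul_map {ι n R S : Type*} [Fintype n] [DecidableEq n]
    [CommRing R] [CommRing S] (f : R →+* S) (r : S) (A : ι → Matrix n n R)
    (v : n → R) (w : List ι) :
    (f ∘ v) ᵥ* (w.map fun c => r • (A c).map f).prod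
      = r ^ w.length • (f ∘ (v ᵥ* (w.map A).prod)) := by
  have hprod : (w.map fun c => r • (A c).map f).prod = r ^ w.length • ((w.map A).prod).map f := by
    rw [← RingHom.mapMatrix_apply, map_list_prod, List.map_map,
      ← List.length_map (f.mapMatrix ∘ A), List.smul_prod, List.map_map]
    rfl
  ext i
  rw [hprod, vecMul_smul, Pi.smul_apply, Pi.smul_apply, Function.comp_apply, RingHom.map_vecMul]

def scaledGen : Bool → Matrix (Fin 3) (Fin 3) ℤ
  | true => !![3, -4, 0; 4, 3, 0; 0, 0, 5]
  | false => !![5, 0, 0; 0, 3, -4; 0, 4, 3]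

def scaledWordVec (w : List Bool) : Fin 3 → ℤ :=
  ![3, 0, 4] ᵥ* (w.map scaledGen).prod

theorem scaledWordVec_append_singleton (w : List Bool) (c : Bool) :
    scaledWordVec (w ++ [c]) = scaledWordVec w ᵥ* scaledGen c := by
  simp [scaledWordVec, vecMul_vecMul]

instance fact_prime_five : Fact (Nat.Prime 5) := ⟨Nat.prime_five⟩

-- `none` stands for the empty word, whose vector is `t` itself.
def lineMod5 : Option Bool → Fin 3 → ZMod 5
  | none => ![3, 0, 4]
  | some true => ![1, 2, 0]
  | some false => ![0, 1, 2]

theorem lineMod5_vecMul_scaledGen (o : Option Bool) (c : Bool) :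
    ∃ μ : ZMod 5, μ ≠ 0 ∧
      lineMod5 o ᵥ* (scaledGen c).map Int.cast = μ • lineMod5 (some c) := by
  revert o c; decide

theorem lineMod5_ne_zero (o : Option Bool) : lineMod5 o ≠ 0 := by
  revert o; decide

theorem eq_of_smul_lineMod5_eq {o o' : Option Bool} {x y : ZMod 5} (hx : x ≠ 0) (hy : y ≠ 0)
    (h : x • lineMod5 o = y • lineMod5 o') : o = o' := by
  revert o o' x y; decide

theorem exists_cast_scaledWordVec_eq_smul_lineMod5 (w : List Bool) :
    ∃ x : ZMod 5, x ≠ 0 ∧ Int.cast ∘ scaledWordVec w = x • lineMod5 w.getLast? := by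
  induction w using List.reverseRecOn with
  | nil => exact ⟨1, one_ne_zero, by ext i; fin_cases i <;> rfl⟩
  | append_singleton w c ih =>
    obtain ⟨x, hx, hw⟩ := ih
    obtain ⟨μ, hμ, hline⟩ := lineMod5_vecMul_scaledGen w.getLast? c
    refine ⟨x * μ, mul_ne_zero hx hμ, ?_⟩
    ext i
    rw [List.getLast?_concat, scaledWordVec_append_singleton, mul_smul, ← hline,
      ← smul_vecMul, ← hw]
    exact RingHom.map_vecMul (Int.castRingHom (ZMod 5)) _ _ i

theorem cast_scaledWordVec_ne_zero (w : List Bool) :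
    (Int.cast ∘ scaledWordVec w : Fin 3 → ZMod 5) ≠ 0 := by
  obtain ⟨x, hx, hw⟩ := exists_cast_scaledWordVec_eq_smul_lineMod5 w
  rw [hw]
  exact smul_ne_zero hx (lineMod5_ne_zero _)

theorem getLast?_eq_of_scaledWordVec_eq {u v : List Bool}
    (h : scaledWordVec u = scaledWordVec v) : u.getLast? = v.getLast? := by
  obtain ⟨x, hx, hu⟩ := exists_cast_scaledWordVec_eq_smul_lineMod5 u
  obtain ⟨y, hy, hv⟩ := exists_cast_scaledWordVec_eq_smul_lineMod5 v
  exact eq_of_smul_lineMod5_eq hx hy (hu ▸ hv ▸ h ▸ rfl)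

theorem scaledGen_vecMul_injective (c : Bool) : Function.Injective (scaledGen c).vecMul := by
  refine isRightRegular_iff_vecMul_injective.mp (isRightRegular_iff_nonsingular.mpr
    (nonsingular_iff_det_ne_zero.mpr ?_))
  cases c <;> simp [scaledGen, det_fin_three]

theorem scaledWordVec_injective : Function.Injective scaledWordVec := by
  intro u
  induction u using List.reverseRecOn with
  | nil =>
    intro v h
    exact (List.getLast?_eq_none_iff.mp (getLast?_eq_of_scaledWordVec_eq h).symm).symm
  | append_singleton u c ih =>
    intro v h
    obtain ⟨v', rfl⟩ := List.getLast?_eq_some_iff.mp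
      ((getLast?_eq_of_scaledWordVec_eq h).symm.trans (List.getLast?_concat ..))
    rw [scaledWordVec_append_singleton, scaledWordVec_append_singleton] at h
    rw [ih (scaledGen_vecMul_injective c h)]

theorem length_eq_of_pow_smul_scaledWordVec_eq {u v : List Bool}
    (h : (5 : ℤ) ^ v.length • scaledWordVec u = (5 : ℤ) ^ u.length • scaledWordVec v) :
    u.length = v.length := by
  wlog huv : u.length ≤ v.length generalizing u v
  · exact (this h.symm (le_of_not_ge huv)).symm
  obtain ⟨k, hk⟩ := Nat.exists_eq_add_of_le huv
  rw [hk, pow_add, mul_smul] at h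
  have hvu : scaledWordVec v = 5 ^ k • scaledWordVec u :=
    (smul_right_injective _ (pow_ne_zero _ (by norm_num))) h.symm
  rcases k with _ | k
  · simp [hk]
  · refine absurd ?_ (cast_scaledWordVec_ne_zero v)
    ext i
    simp [hvu, pow_succ, show (5 : ZMod 5) = 0 from rfl]

theorem vecMul_prod_eq_smul_scaledWordVec (w : List Bool) :
    (![3, 0, 4] : Fin 3 → ℝ) ᵥ* (w.map fun c => (1 / 5 : ℝ) • (scaledGen c).map Int.cast).prod
      = (1 / 5 : ℝ) ^ w.length • (Int.cast ∘ scaledWordVec w) := by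
  have ht : (![3, 0, 4] : Fin 3 → ℝ) = Int.castRingHom ℝ ∘ ![3, 0, 4] := by
    ext i; fin_cases i <;> simp
  rw [ht]
  exact vecMul_list_prod_map_smul_map (Int.castRingHom ℝ) _ scaledGen _ w

theorem pow_smul_scaledWordVec_eq {u v : List Bool}
    (h : (1 / 5 : ℝ) ^ u.length • (Int.cast ∘ scaledWordVec u : Fin 3 → ℝ)
      = (1 / 5 : ℝ) ^ v.length • (Int.cast ∘ scaledWordVec v)) :
    (5 : ℤ) ^ v.length • scaledWordVec u = (5 : ℤ) ^ u.length • scaledWordVec v := by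
  ext i
  have hi := congrFun h i
  simp only [Pi.smul_apply, Function.comp_apply, smul_eq_mul, one_div, inv_pow] at hi ⊢
  field_simp at hi
  rw [mul_comm]
  exact_mod_cast hi

theorem vec_times_word_injective :
    ∀ (Xa Xb : Matrix (Fin 3) (Fin 3) ℝ),
    Xa = (1/5 : ℝ) • !![3, -4, 0; 4, 3, 0; 0, 0, 5] →
    Xb = (1/5 : ℝ) • !![5, 0, 0; 0, 3, -4; 0, 4, 3] →
    ∀ u v : List Bool,  -- `true` stands for letter `a`, `false` for letter `b`
      Matrix.vecMul (![3, 0, 4] : Fin 3 → ℝ)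
          ((u.map (fun c => if c then Xa else Xb)).prod)
        = Matrix.vecMul (![3, 0, 4] : Fin 3 → ℝ)
          ((v.map (fun c => if c then Xa else Xb)).prod) →
      u = v := by
  intro Xa Xb hXa hXb u v h
  have hgen : ∀ c : Bool,
      (if c then Xa else Xb) = (1 / 5 : ℝ) • (scaledGen c).map (Int.cast : ℤ → ℝ) := by
    intro c
    cases c <;> simp [hXa, hXb, scaledGen, ← Matrix.ext_iff, Fin.forall_fin_succ]
  simp only [hgen, vecMul_prod_eq_smul_scaledWordVec] at h
  have hpow := pow_smul_scaledWordVec_eq h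
  have hlen := length_eq_of_pow_smul_scaledWordVec_eq hpow
  rw [hlen] at hpow
  exact scaledWordVec_injective (smul_right_injective _ (pow_ne_zero _ (by norm_num)) hpow)
end

section
/- Let X_a = (1/5)[[3,-4,0],[4,3,0],[0,0,5]] and X_b = (1/5)[[5,0,0],[0,3,-4],[0,4,3]]. The subgroup of SO(3) generated by X_a and X_b is a free group on the two generators. -/
open Matrix

namespace RotFreeAux

set_option maxHeartbeats 1000000

/-- Integer step: action of `5 * (generator)` on integer triples. -/
def step (p : Fin 2 × Bool) (v : ℤ × ℤ × ℤ) : ℤ × ℤ × ℤ :=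
  if p.1 = 0 then
    if p.2 then (3*v.1 - 4*v.2.1, 4*v.1 + 3*v.2.1, 5*v.2.2)
    else (3*v.1 + 4*v.2.1, -4*v.1 + 3*v.2.1, 5*v.2.2)
  else
    if p.2 then (5*v.1, 3*v.2.1 - 4*v.2.2, 4*v.2.1 + 3*v.2.2)
    else (5*v.1, 3*v.2.1 + 4*v.2.2, -4*v.2.1 + 3*v.2.2)

/-- Integer vector `5^n * w * (0,1,0)`. -/
def g : List (Fin 2 × Bool) → ℤ × ℤ × ℤ
  | [] => (0, 1, 0)
  | p :: l => step p (g l)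

/-- Mod-5 condition on the vector, depending on the first (last-applied) letter. -/
def cond (p : Fin 2 × Bool) (v : ℤ × ℤ × ℤ) : Prop :=
  ((v.2.1 : ZMod 5) ≠ 0) ∧
  (if p.1 = 0 then
    ((v.2.2 : ZMod 5) = 0 ∧ (v.1 : ZMod 5) = (if p.2 then 2 else -2) * (v.2.1 : ZMod 5))
  else
    ((v.1 : ZMod 5) = 0 ∧ (v.2.2 : ZMod 5) = (if p.2 then -2 else 2) * (v.2.1 : ZMod 5)))

theorem fin2 : ∀ i : Fin 2, i = 0 ∨ i = 1 := by decide

theorem invariant : ∀ (l : List (Fin 2 × Bool)) (p : Fin 2 × Bool),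
    (p :: l).Chain' (fun p q => ¬(p.1 = q.1 ∧ p.2 ≠ q.2)) → cond p (g (p :: l)) := by
  intro l
  induction l with
  | nil =>
    rintro ⟨i, e⟩ _
    rcases fin2 i with rfl | rfl <;> cases e <;> simp [cond, g, step] <;> decide
  | cons q l ih =>
    rintro ⟨i, e⟩ hch
    simp only [List.Chain', List.isChain_cons_cons] at hch
    have hnot := hch.1
    have ihq := ih q hch.2
    obtain ⟨j, e'⟩ := q
    rcases hv : g ((j, e') :: l) with ⟨a0, b0, c0⟩
    rw [hv] at ihq
    rcases fin2 i with rfl | rfl <;> rcases fin2 j with rfl | rfl <;> cases e <;> cases e'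
    all_goals (try (exact absurd (by decide) hnot))
    all_goals rw [g, hv]
    all_goals simp only [cond, step] at ihq ⊢
    all_goals norm_num at ihq ⊢
    all_goals obtain ⟨hb, hx, hy⟩ := ihq
    all_goals (
      revert hb hx hy
      generalize ((a0 : ℤ) : ZMod 5) = A
      generalize ((b0 : ℤ) : ZMod 5) = B
      generalize ((c0 : ℤ) : ZMod 5) = C
      revert A B C
      decide)

theorem Ma_inv : ((1/5 : ℝ) • !![3, -4, 0; 4, 3, 0; 0, 0, 5] : Matrix (Fin 3) (Fin 3) ℝ)⁻¹
    = (1/5 : ℝ) • !![3, 4, 0; -4, 3, 0; 0, 0, 5] :=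
  inv_eq_right_inv (by
    ext i j; fin_cases i <;> fin_cases j <;>
      simp [Matrix.mul_apply, Fin.sum_univ_three, Matrix.vecHead, Matrix.vecTail] <;> norm_num)

theorem Mb_inv : ((1/5 : ℝ) • !![5, 0, 0; 0, 3, -4; 0, 4, 3] : Matrix (Fin 3) (Fin 3) ℝ)⁻¹
    = (1/5 : ℝ) • !![5, 0, 0; 0, 3, 4; 0, -4, 3] :=
  inv_eq_right_inv (by
    ext i j; fin_cases i <;> fin_cases j <;>
      simp [Matrix.mul_apply, Fin.sum_univ_three, Matrix.vecHead, Matrix.vecTail] <;> norm_num)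

theorem vec : ∀ l : List (Fin 2 × Bool),
    (l.map (fun p => if p.1 = 0 then
        (if p.2 then ((1/5 : ℝ) • !![3, -4, 0; 4, 3, 0; 0, 0, 5] : Matrix (Fin 3) (Fin 3) ℝ)
         else (1/5 : ℝ) • !![3, 4, 0; -4, 3, 0; 0, 0, 5])
      else
        (if p.2 then (1/5 : ℝ) • !![5, 0, 0; 0, 3, -4; 0, 4, 3]
         else (1/5 : ℝ) • !![5, 0, 0; 0, 3, 4; 0, -4, 3]))).prod *ᵥ ![0, 1, 0]
    = ((5:ℝ) ^ l.length)⁻¹ • ![((g l).1 : ℝ), ((g l).2.1 : ℝ), ((g l).2.2 : ℝ)] := by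
  intro l
  induction l with
  | nil => simp [g, Matrix.one_mulVec]
  | cons p l ih =>
    rw [List.map_cons, List.prod_cons, ← Matrix.mulVec_mulVec, ih, Matrix.mulVec_smul]
    obtain ⟨i, e⟩ := p
    rcases fin2 i with rfl | rfl <;> cases e <;>
      (ext k; fin_cases k <;>
        simp [g, step, Matrix.mulVec, dotProduct, Fin.sum_univ_three,
          pow_succ, mul_inv] <;> push_cast <;> ring)

end RotFreeAux

/-- The group generated by the two rotations is free: no nonempty reduced word in the
generators and their inverses equals the identity. -/
theorem rotations_generate_free_group :
    ∀ (Xa Xb : Matrix (Fin 3) (Fin 3) ℝ),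
    Xa = (1/5 : ℝ) • !![3, -4, 0; 4, 3, 0; 0, 0, 5] →
    Xb = (1/5 : ℝ) • !![5, 0, 0; 0, 3, -4; 0, 4, 3] →
    ∀ (l : List (Fin 2 × Bool)),
      -- reduced: no two consecutive factors are inverses of each other
      l.Chain' (fun p q => ¬(p.1 = q.1 ∧ p.2 ≠ q.2)) →
      l ≠ [] →
      (l.map (fun p => if p.1 = 0 then (if p.2 then Xa else Xa⁻¹)
                       else (if p.2 then Xb else Xb⁻¹))).prod ≠ 1 := by
  intro Xa Xb hXa hXb l hch hne hprod
  subst hXa hXb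
  rw [show (fun p : Fin 2 × Bool => if p.1 = 0 then
        (if p.2 then ((1/5 : ℝ) • !![3, -4, 0; 4, 3, 0; 0, 0, 5] : Matrix (Fin 3) (Fin 3) ℝ)
         else ((1/5 : ℝ) • !![3, -4, 0; 4, 3, 0; 0, 0, 5])⁻¹)
      else
        (if p.2 then (1/5 : ℝ) • !![5, 0, 0; 0, 3, -4; 0, 4, 3]
         else ((1/5 : ℝ) • !![5, 0, 0; 0, 3, -4; 0, 4, 3])⁻¹))
      = (fun p : Fin 2 × Bool => if p.1 = 0 then
        (if p.2 then ((1/5 : ℝ) • !![3, -4, 0; 4, 3, 0; 0, 0, 5] : Matrix (Fin 3) (Fin 3) ℝ)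
         else (1/5 : ℝ) • !![3, 4, 0; -4, 3, 0; 0, 0, 5])
      else
        (if p.2 then (1/5 : ℝ) • !![5, 0, 0; 0, 3, -4; 0, 4, 3]
         else (1/5 : ℝ) • !![5, 0, 0; 0, 3, 4; 0, -4, 3]))
      from by funext p; rw [RotFreeAux.Ma_inv, RotFreeAux.Mb_inv]] at hprod
  have hv := RotFreeAux.vec l
  rw [hprod, Matrix.one_mulVec] at hv
  -- compare middle coordinates
  have h1 : (1 : ℝ) = ((5:ℝ) ^ l.length)⁻¹ * ((RotFreeAux.g l).2.1 : ℝ) := by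
    have := congrFun hv 1
    simpa using this
  have h5 : ((RotFreeAux.g l).2.1 : ℝ) = ((5 ^ l.length : ℤ) : ℝ) := by
    push_cast
    field_simp at h1
    linarith
  have hZ : (RotFreeAux.g l).2.1 = 5 ^ l.length := by exact_mod_cast h5
  obtain ⟨p, l', rfl⟩ : ∃ p l', l = p :: l' := by
    cases l with
    | nil => exact absurd rfl hne
    | cons p l' => exact ⟨p, l', rfl⟩
  have hinv := RotFreeAux.invariant l' p hch
  have hb := hinv.1
  apply hb
  rw [hZ]
  push_cast
  rw [show ((5:ZMod 5)) = 0 from rfl]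
  exact zero_pow (by simp)
end

section
/- Let A be a QFA with rational-entried unitary matrices X_i, rational unit initial vector s ∈ R^n, and rational orthogonal projection P, and let λ ∈ Q with 0 ≤ λ ≤ 1. Write λ = a_1²+a_2²+a_3²+a_4² and 1−λ = b_1²+b_2²+b_3²+b_4² with all a_i, b_i ∈ Q. Define B on R^{n+7} by X_i^B = diag(X_i, I_7), s^B = (a_1 s, a_2, a_3, a_4, b_1, b_2, b_3, b_4), P^B = diag(P, I_3, 0_4). Then B is a valid QFA with rational entries and Val_B(w) = a_1² Val_A(w) + a_2² + a_3² + a_4² for every word w. -/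
/-!
Every matrix of `B` is block diagonal with the identity on the seven new coordinates, so a run of
`B` on `w` acts as `A` on the first block, scaled by `a 0`, and fixes the new coordinates. The
projection `P^B` keeps the three coordinates carrying `a 1, a 2, a 3`, which contribute the constant
`a 1 ^ 2 + a 2 ^ 2 + a 3 ^ 2`; the `b`'s sit in discarded coordinates and only make `s^B` a unit
vector, since its squared norm is `λ + (1 - λ)`.
-/

open Matrix

namespace Matrix

variable {l m α : Type*} [Fintype l] [Fintype m]

theorem fromBlocks_diag_mul_fromBlocks_diag [NonUnitalNonAssocSemiring α] (A A' : Matrix l l α)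
    (D D' : Matrix m m α) :
    fromBlocks A 0 0 D * fromBlocks A' 0 0 D' = fromBlocks (A * A') 0 0 (D * D') := by
  simp [fromBlocks_multiply]

theorem fromBlocks_diag_mul_transpose_eq_one [DecidableEq l] [DecidableEq m] [Semiring α]
    {A : Matrix l l α} {D : Matrix m m α} (hA : A * Aᵀ = 1) (hD : D * Dᵀ = 1) :
    fromBlocks A 0 0 D * (fromBlocks A 0 0 D)ᵀ = 1 := by
  simp only [fromBlocks_transpose, transpose_zero, fromBlocks_diag_mul_fromBlocks_diag, hA, hD,
    fromBlocks_one]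

theorem isIdempotentElem_fromBlocks_diag [NonUnitalNonAssocSemiring α] {A : Matrix l l α}
    {D : Matrix m m α} (hA : IsIdempotentElem A) (hD : IsIdempotentElem D) :
    IsIdempotentElem (fromBlocks A 0 0 D) := by
  rw [IsIdempotentElem, fromBlocks_diag_mul_fromBlocks_diag, hA.eq, hD.eq]

theorem list_prod_map_fromBlocks_diag [DecidableEq l] [DecidableEq m] [Semiring α] {ι : Type*}
    (X : ι → Matrix l l α) (Y : ι → Matrix m m α) (w : List ι) :
    (w.map fun i => fromBlocks (X i) 0 0 (Y i)).prod
      = fromBlocks (w.map X).prod 0 0 (w.map Y).prod := by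
  induction w with
  | nil => simp
  | cons i w ih => simp [ih, fromBlocks_diag_mul_fromBlocks_diag]

theorem sum_elim_vecMul_fromBlocks_diag [NonUnitalNonAssocSemiring α] (u : l → α) (v : m → α)
    (A : Matrix l l α) (D : Matrix m m α) :
    Sum.elim u v ᵥ* fromBlocks A 0 0 D = Sum.elim (u ᵥ* A) (v ᵥ* D) := by
  simp [vecMul_fromBlocks]

end Matrix

theorem qfa_rational_threshold_shift_general {n : ℕ} {ι : Type*}
    -- the QFA `A` has rational entries: we work over `ℚ`
    (X : ι → Matrix (Fin n) (Fin n) ℚ) (s : Fin n → ℚ) (P : Matrix (Fin n) (Fin n) ℚ)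
    (hX : ∀ i, X i * (X i)ᵀ = 1)
    (hs : ∑ i, (s i) ^ 2 = 1)
    (hP : P * P = P ∧ Pᵀ = P)
    (lam : ℚ)
    (a b : Fin 4 → ℚ)
    (ha : lam = a 0 ^ 2 + a 1 ^ 2 + a 2 ^ 2 + a 3 ^ 2)
    (hb : 1 - lam = b 0 ^ 2 + b 1 ^ 2 + b 2 ^ 2 + b 3 ^ 2) :
    let XB : ι → Matrix (Fin n ⊕ Fin 7) (Fin n ⊕ Fin 7) ℚ :=
      fun i => Matrix.fromBlocks (X i) 0 0 1
    let sB : (Fin n ⊕ Fin 7) → ℚ :=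
      Sum.elim (fun j => a 0 * s j) ![a 1, a 2, a 3, b 0, b 1, b 2, b 3]
    let PB : Matrix (Fin n ⊕ Fin 7) (Fin n ⊕ Fin 7) ℚ :=
      Matrix.fromBlocks P 0 0 (Matrix.diagonal ![1, 1, 1, 0, 0, 0, 0])
    (∀ i, XB i * (XB i)ᵀ = 1) ∧
    (∑ j, (sB j) ^ 2 = 1) ∧
    (PB * PB = PB ∧ PBᵀ = PB) ∧
    (∀ w : List ι,
      ∑ j, (Matrix.vecMul sB ((w.map XB).prod * PB) j) ^ 2
        = a 0 ^ 2 * (∑ j, (Matrix.vecMul s ((w.map X).prod * P) j) ^ 2)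
            + a 1 ^ 2 + a 2 ^ 2 + a 3 ^ 2) := by
  intro XB sB PB
  have hd : IsIdempotentElem (diagonal (![1, 1, 1, 0, 0, 0, 0] : Fin 7 → ℚ)) := by
    rw [IsIdempotentElem, diagonal_mul_diagonal]
    congr 1
    ext k
    fin_cases k <;> norm_num
  refine ⟨fun i => fromBlocks_diag_mul_transpose_eq_one (hX i) (by simp), ?_,
    ⟨isIdempotentElem_fromBlocks_diag hP.1 hd,
      IsSymm.fromBlocks hP.2 (by simp) (isSymm_diagonal _)⟩, fun w => ?_⟩
  · simp only [sB, Fintype.sum_sum_type, Sum.elim_inl, Sum.elim_inr, mul_pow, ← Finset.mul_sum,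
      hs, mul_one, Fin.sum_univ_seven, cons_val]
    linear_combination -(ha + hb)
  · have hsB : sB = Sum.elim (a 0 • s) ![a 1, a 2, a 3, b 0, b 1, b 2, b 3] := rfl
    simp only [XB, PB, hsB, list_prod_map_fromBlocks_diag, fromBlocks_diag_mul_fromBlocks_diag,
      sum_elim_vecMul_fromBlocks_diag, smul_vecMul, List.map_const', List.prod_replicate, one_pow,
      one_mul, Fintype.sum_sum_type, Sum.elim_inl, Sum.elim_inr, Pi.smul_apply, smul_eq_mul,
      mul_pow, ← Finset.mul_sum, vecMul_diagonal, Fin.sum_univ_seven, cons_val]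
    ring

theorem qfa_rational_threshold_shift {n : ℕ} {ι : Type*}
    -- the QFA `A` has rational entries: we work over `ℚ`
    (X : ι → Matrix (Fin n) (Fin n) ℚ) (s : Fin n → ℚ) (P : Matrix (Fin n) (Fin n) ℚ)
    (hX : ∀ i, X i * (X i)ᵀ = 1)
    (hs : ∑ i, (s i) ^ 2 = 1)
    (hP : P * P = P ∧ Pᵀ = P)
    (lam : ℚ) (hlam : 0 ≤ lam ∧ lam ≤ 1)
    (a b : Fin 4 → ℚ)
    (ha : lam = a 0 ^ 2 + a 1 ^ 2 + a 2 ^ 2 + a 3 ^ 2)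
    (hb : 1 - lam = b 0 ^ 2 + b 1 ^ 2 + b 2 ^ 2 + b 3 ^ 2) :
    let XB : ι → Matrix (Fin n ⊕ Fin 7) (Fin n ⊕ Fin 7) ℚ :=
      fun i => Matrix.fromBlocks (X i) 0 0 1
    let sB : (Fin n ⊕ Fin 7) → ℚ :=
      Sum.elim (fun j => a 0 * s j) ![a 1, a 2, a 3, b 0, b 1, b 2, b 3]
    let PB : Matrix (Fin n ⊕ Fin 7) (Fin n ⊕ Fin 7) ℚ :=
      Matrix.fromBlocks P 0 0 (Matrix.diagonal ![1, 1, 1, 0, 0, 0, 0])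
    (∀ i, XB i * (XB i)ᵀ = 1) ∧
    (∑ j, (sB j) ^ 2 = 1) ∧
    (PB * PB = PB ∧ PBᵀ = PB) ∧
    (∀ w : List ι,
      ∑ j, (Matrix.vecMul sB ((w.map XB).prod * PB) j) ^ 2
        = a 0 ^ 2 * (∑ j, (Matrix.vecMul s ((w.map X).prod * P) j) ^ 2)
            + a 1 ^ 2 + a 2 ^ 2 + a 3 ^ 2) :=
  qfa_rational_threshold_shift_general X s P hX hs hP lam a b ha hb
end

section
/- Let S be a subsemigroup of the group O(n) of n×n real orthogonal matrices. Then the topological closure of S in the space of n×n real matrices is a subgroup of O(n); in particular, for every X in the closure, X^{-1} also lies in the closure. -/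
open Matrix Filter

private lemma orth_pow {n : ℕ} (X : Matrix (Fin n) (Fin n) ℝ) (h : X * Xᵀ = 1) (m : ℕ) :
    X ^ m * (X ^ m)ᵀ = 1 := by
  induction m with
  | zero => simp
  | succ k ih =>
    rw [pow_succ, transpose_mul, mul_assoc, ← mul_assoc X, h, one_mul, ih]

private lemma orth_compact {n : ℕ} :
    IsCompact {M : Matrix (Fin n) (Fin n) ℝ | M * Mᵀ = 1} := by
  have hcl : IsClosed {M : Matrix (Fin n) (Fin n) ℝ | M * Mᵀ = 1} :=
    isClosed_singleton.preimage (Continuous.matrix_mul continuous_id continuous_id.matrix_transpose)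
  have hsub : {M : Matrix (Fin n) (Fin n) ℝ | M * Mᵀ = 1} ⊆
      Set.univ.pi fun _ : Fin n => Set.univ.pi fun _ : Fin n => Set.Icc (-1:ℝ) 1 := by
    intro M hM
    apply Set.mem_univ_pi.mpr
    intro i
    rw [Set.mem_univ_pi]
    intro j
    have h1 : (M * Mᵀ) i i = 1 := by rw [hM]; simp [Matrix.one_apply]
    rw [Matrix.mul_apply] at h1
    have hle : M i j * M i j ≤ 1 := by
      rw [← h1]
      exact Finset.single_le_sum (fun k _ => by simpa using mul_self_nonneg (M i k))
        (Finset.mem_univ j)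
    constructor <;> nlinarith
  exact IsCompact.of_isClosed_subset
    (isCompact_univ_pi fun _ => isCompact_univ_pi fun _ => isCompact_Icc) hcl hsub

/-- The cluster-point argument: if all elements of `closure S` are orthogonal and `X` together
with all of its positive powers lies in `closure S`, then some sequence of positive powers of `X`
with strictly increasing exponents has consecutive quotients tending to `1`. -/
private lemma pow_diff_tendsto_one {n : ℕ} (S : Set (Matrix (Fin n) (Fin n) ℝ))
    (horthc : ∀ Z ∈ closure S, Z * Zᵀ = 1)
    (X : Matrix (Fin n) (Fin n) ℝ) (hX : X ∈ closure S)
    (hpow : ∀ m : ℕ, X ^ (m + 1) ∈ closure S) :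
    ∃ k : ℕ → ℕ, StrictMono k ∧ (∀ j, 1 ≤ k j) ∧
      Tendsto (fun j => X ^ (k (j + 1) - k j)) atTop (nhds 1) := by
  have hXo : X * Xᵀ = 1 := horthc X hX
  -- the sequence of powers lies in the compact orthogonal set
  haveI : FirstCountableTopology (Matrix (Fin n) (Fin n) ℝ) :=
    inferInstanceAs (FirstCountableTopology ((Fin n) → (Fin n) → ℝ))
  have hmem : ∀ m : ℕ, (X ^ (m + 1)) ∈ {M : Matrix (Fin n) (Fin n) ℝ | M * Mᵀ = 1} :=
    fun m => orth_pow X hXo (m + 1)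
  obtain ⟨Y, hY, φ, hφ, hconv⟩ := orth_compact.tendsto_subseq hmem
  refine ⟨fun j => φ j + 1, fun a b hab => by simpa using hφ hab, fun j => Nat.le_add_left 1 _, ?_⟩
  -- Y is orthogonal; also Y ∈ closure S
  have hYc : Y ∈ closure S := by
    exact isClosed_closure.mem_of_tendsto hconv (Eventually.of_forall fun j => hpow (φ j))
  have hYo : Y * Yᵀ = 1 := horthc Y hYc
  -- X^(k (j+1)) * (X^(k j))ᵀ → Y * Yᵀ = 1
  have h1 : Tendsto (fun j => X ^ (φ (j + 1) + 1) * (X ^ (φ j + 1))ᵀ) atTop (nhds 1) := by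
    have ht : Tendsto (fun j => X ^ (φ (j + 1) + 1)) atTop (nhds Y) :=
      hconv.comp (tendsto_add_atTop_nat 1)
    have ht2 : Tendsto (fun j => (X ^ (φ j + 1))ᵀ) atTop (nhds Yᵀ) :=
      ((continuous_id.matrix_transpose).tendsto Y).comp hconv
    simpa [hYo] using ht.mul ht2
  -- rewrite the terms
  have heq : ∀ j, X ^ (φ (j + 1) + 1) * (X ^ (φ j + 1))ᵀ = X ^ ((φ (j + 1) + 1) - (φ j + 1)) := by
    intro j
    have hlt : φ j + 1 ≤ φ (j + 1) + 1 := by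
      have := hφ (show j < j + 1 by omega); omega
    have hA : X ^ (φ (j + 1) + 1) =
        X ^ ((φ (j + 1) + 1) - (φ j + 1)) * X ^ (φ j + 1) := by
      rw [← pow_add, Nat.sub_add_cancel hlt]
    rw [hA, mul_assoc, orth_pow X hXo (φ j + 1), mul_one]
  simpa only [heq] using h1

theorem closure_of_orthogonal_semigroup_is_group {n : ℕ}
    (S : Set (Matrix (Fin n) (Fin n) ℝ))
    (hne : S.Nonempty)
    (hmul : ∀ a ∈ S, ∀ b ∈ S, a * b ∈ S)
    (horth : ∀ X ∈ S, X * Xᵀ = 1) :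
    (1 ∈ closure S) ∧
    (∀ a ∈ closure S, ∀ b ∈ closure S, a * b ∈ closure S) ∧
    (∀ X ∈ closure S, X * Xᵀ = 1) ∧
    (∀ X ∈ closure S, X⁻¹ ∈ closure S) := by
  -- closure is closed under multiplication
  have hmulc : ∀ a ∈ closure S, ∀ b ∈ closure S, a * b ∈ closure S := by
    intro a ha b hb
    exact map_mem_closure₂ continuous_mul ha hb hmul
  -- every element of the closure is orthogonal
  have horthc : ∀ X ∈ closure S, X * Xᵀ = 1 := by
    have hcl : IsClosed {M : Matrix (Fin n) (Fin n) ℝ | M * Mᵀ = 1} :=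
      isClosed_singleton.preimage
        (Continuous.matrix_mul continuous_id continuous_id.matrix_transpose)
    exact fun X hX => closure_minimal (fun M hM => horth M hM) hcl hX
  -- positive powers of elements of the closure stay in the closure
  have hpow1 : ∀ X ∈ closure S, ∀ m : ℕ, X ^ (m + 1) ∈ closure S := by
    intro X hX m
    induction m with
    | zero => simpa using hX
    | succ k ih => rw [pow_succ]; exact hmulc _ ih _ hX
  -- 1 belongs to the closure
  have hone : (1 : Matrix (Fin n) (Fin n) ℝ) ∈ closure S := by
    obtain ⟨a, ha⟩ := hne
    have hac : a ∈ closure S := subset_closure ha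
    obtain ⟨k, hk, hk1, htend⟩ := pow_diff_tendsto_one S horthc a hac (hpow1 a hac)
    refine isClosed_closure.mem_of_tendsto htend (Filter.Eventually.of_forall fun j => ?_)
    have hd : 1 ≤ k (j + 1) - k j := by
      have := hk (show j < j + 1 by omega); omega
    have : k (j + 1) - k j = (k (j + 1) - k j - 1) + 1 := by omega
    rw [this]
    exact hpow1 a hac _
  refine ⟨hone, hmulc, horthc, ?_⟩
  -- inverses
  intro X hX
  have hXo : X * Xᵀ = 1 := horthc X hX
  have hpow0 : ∀ m : ℕ, X ^ m ∈ closure S := by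
    intro m
    cases m with
    | zero => simpa using hone
    | succ k => exact hpow1 X hX k
  obtain ⟨k, hk, hk1, htend⟩ := pow_diff_tendsto_one S horthc X hX (hpow1 X hX)
  have htend' : Filter.Tendsto (fun j => X ^ (k (j + 1) - k j) * Xᵀ) Filter.atTop (nhds Xᵀ) := by
    simpa using htend.mul (tendsto_const_nhds : Filter.Tendsto _ Filter.atTop (nhds Xᵀ))
  have heq : ∀ j, X ^ (k (j + 1) - k j) * Xᵀ = X ^ (k (j + 1) - k j - 1) := by
    intro j
    have hd : 1 ≤ k (j + 1) - k j := by
      have := hk (show j < j + 1 by omega); omega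
    have h2 : k (j + 1) - k j = (k (j + 1) - k j - 1) + 1 := by omega
    rw [h2, pow_succ, mul_assoc, hXo, mul_one, Nat.add_sub_cancel]
  rw [show (fun j => X ^ (k (j + 1) - k j) * Xᵀ) = fun j => X ^ (k (j + 1) - k j - 1) from
    funext heq] at htend'
  have hT : Xᵀ ∈ closure S :=
    isClosed_closure.mem_of_tendsto htend' (Filter.Eventually.of_forall fun j => hpow0 _)
  rw [inv_eq_right_inv hXo]
  exact hT
end

section
/- Every compact subgroup G of GL(n, R) is a real algebraic set: G is the common zero set of the family of real polynomials f in the matrix entries satisfying f(I) = 0 and f(gX) = f(X) for all g ∈ G and all matrices X. -/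
open Matrix MvPolynomial MeasureTheory TopologicalSpace

namespace CGIA


variable {n : ℕ}

/-- The linear substitution polynomials: `(L A) (i,j)` represents the `(i,j)` entry of `A * X`. -/
noncomputable def L (A : Matrix (Fin n) (Fin n) ℝ) (v : Fin n × Fin n) :
    MvPolynomial (Fin n × Fin n) ℝ :=
  ∑ k, C (A v.1 k) * X (k, v.2)

lemma eval_L (A M : Matrix (Fin n) (Fin n) ℝ) (v : Fin n × Fin n) :
    eval (fun p => M p.1 p.2) (L A v) = (A * M) v.1 v.2 := by
  simp [L, Matrix.mul_apply]

lemma eval_bind_L (A M : Matrix (Fin n) (Fin n) ℝ) (f : MvPolynomial (Fin n × Fin n) ℝ) :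
    eval (fun p => M p.1 p.2) (bind₁ (L A) f) = eval (fun p => (A * M) p.1 p.2) f := by
  have key : ∀ (x : Fin n × Fin n → ℝ) (q : MvPolynomial (Fin n × Fin n) ℝ),
      aeval x q = eval x q := fun x q => by rw [← coe_aeval_eq_eval]; rfl
  rw [← key, aeval_bind₁]
  simp only [key, eval_L]

lemma continuous_coeff_L (v : Fin n × Fin n) (m : (Fin n × Fin n) →₀ ℕ) :
    Continuous fun A : Matrix (Fin n) (Fin n) ℝ => coeff m (L A v) := by
  simp only [L, coeff_sum, coeff_C_mul]
  exact continuous_finset_sum _ fun k _ =>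
    (continuous_id.matrix_elem v.1 k).mul continuous_const

lemma continuous_coeff_bind (f : MvPolynomial (Fin n × Fin n) ℝ) :
    ∀ m, Continuous fun A : Matrix (Fin n) (Fin n) ℝ => coeff m (bind₁ (L A) f) := by
  induction f using MvPolynomial.induction_on with
  | C a => intro m; simp only [bind₁_C_right]; exact continuous_const
  | add p q hp hq => intro m; simp only [map_add, coeff_add]; exact (hp m).add (hq m)
  | mul_X p v hp =>
    intro m
    simp only [_root_.map_mul, bind₁_X_right, coeff_mul]
    exact continuous_finset_sum _ fun x _ => (hp x.1).mul (continuous_coeff_L v x.2)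

lemma totalDegree_L_le (A : Matrix (Fin n) (Fin n) ℝ) (v : Fin n × Fin n) :
    (L A v).totalDegree ≤ 1 := by
  refine (totalDegree_finset_sum _ _).trans (Finset.sup_le fun k _ => ?_)
  refine (totalDegree_mul _ _).trans ?_
  simp [totalDegree_C, totalDegree_X]

lemma totalDegree_bind_L_le (A : Matrix (Fin n) (Fin n) ℝ)
    (f : MvPolynomial (Fin n × Fin n) ℝ) :
    (bind₁ (L A) f).totalDegree ≤ f.totalDegree := by
  have hb : bind₁ (L A) f = eval₂ C (L A) f := by
    rw [bind₁, aeval_def, algebraMap_eq]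
  rw [hb, eval₂_eq]
  refine (totalDegree_finset_sum _ _).trans (Finset.sup_le fun m hm => ?_)
  refine (totalDegree_mul _ _).trans ?_
  rw [totalDegree_C, zero_add]
  refine (totalDegree_finset_prod _ _).trans ?_
  have h1 : ∀ i ∈ m.support, (L A i ^ m i).totalDegree ≤ m i := fun i _ => by
    refine (totalDegree_pow _ _).trans ?_
    have := Nat.mul_le_mul_left (m i) (totalDegree_L_le A i)
    simpa using this
  refine le_trans (Finset.sum_le_sum h1) ?_
  exact le_totalDegree hm


variable {n : ℕ}

section Setup
variable (G : Set (Matrix (Fin n) (Fin n) ℝ))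
    (hone : 1 ∈ G)
    (hmul : ∀ a ∈ G, ∀ b ∈ G, a * b ∈ G)
    (hinv : ∀ X ∈ G, IsUnit X ∧ X⁻¹ ∈ G)

noncomputable def grp : Group ↥G where
  mul a b := ⟨a.1 * b.1, hmul _ a.2 _ b.2⟩
  one := ⟨1, hone⟩
  inv a := ⟨(a.1)⁻¹, (hinv _ a.2).2⟩
  mul_assoc a b c := Subtype.ext (mul_assoc a.1 b.1 c.1)
  one_mul a := Subtype.ext (one_mul a.1)
  mul_one a := Subtype.ext (mul_one a.1)
  inv_mul_cancel a := Subtype.ext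
    (Matrix.nonsing_inv_mul a.1 ((Matrix.isUnit_iff_isUnit_det a.1).mp (hinv _ a.2).1))

include hinv in
theorem continuous_inv_coe :
    Continuous fun a : ↥G => (a.1)⁻¹ := by
  have h : ∀ a : ↥G, (a.1)⁻¹ = (a.1.det)⁻¹ • a.1.adjugate := by
    intro a
    rw [Matrix.inv_def, Ring.inverse_eq_inv']
  simp only [h]
  have hne : ∀ a : ↥G, a.1.det ≠ 0 := fun a =>
    ((Matrix.isUnit_iff_isUnit_det a.1).mp (hinv _ a.2).1).ne_zero
  exact ((continuous_subtype_val.matrix_det).inv₀ hne).smul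
    continuous_subtype_val.matrix_adjugate

theorem topGrp :
    letI := grp G hone hmul hinv
    IsTopologicalGroup ↥G := by
  letI := grp G hone hmul hinv
  exact {
    continuous_mul := ((continuous_subtype_val.comp continuous_fst).matrix_mul
      (continuous_subtype_val.comp continuous_snd)).subtype_mk _
    continuous_inv := (continuous_inv_coe G hinv).subtype_mk _ }

end Setup

theorem exists_poly_approx (K : Set (Matrix (Fin n) (Fin n) ℝ)) (hK : IsCompact K)
    (φ : C(Matrix (Fin n) (Fin n) ℝ, ℝ)) (ε : ℝ) (hε : 0 < ε) :
    ∃ f : MvPolynomial (Fin n × Fin n) ℝ,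
      ∀ x ∈ K, |eval (fun p => x p.1 p.2) f - φ x| < ε := by
  haveI : CompactSpace ↥K := isCompact_iff_compactSpace.mp hK
  set c : (Fin n × Fin n) → C(↥K, ℝ) := fun v =>
    ⟨fun x => (x : Matrix (Fin n) (Fin n) ℝ) v.1 v.2,
      continuous_subtype_val.matrix_elem _ _⟩ with hc
  set A := Algebra.adjoin ℝ (Set.range c) with hA
  have sep : A.SeparatesPoints := by
    intro x y hxy
    have hM : (x : Matrix (Fin n) (Fin n) ℝ) ≠ y := fun h => hxy (Subtype.ext h)
    have : ∃ v : Fin n × Fin n, (x : Matrix (Fin n) (Fin n) ℝ) v.1 v.2 ≠ (y : Matrix (Fin n) (Fin n) ℝ) v.1 v.2 := by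
      by_contra hcon
      push_neg at hcon
      exact hM (Matrix.ext fun i j => hcon (i, j))
    obtain ⟨v, hv⟩ := this
    exact ⟨c v, ⟨c v, Algebra.subset_adjoin (Set.mem_range_self v), rfl⟩, hv⟩
  obtain ⟨g, hg⟩ := ContinuousMap.exists_mem_subalgebra_near_continuous_of_separatesPoints
    A sep (fun x : ↥K => φ x) (φ.continuous.comp continuous_subtype_val) ε hε
  have hrep : ∀ a ∈ A, ∃ q : MvPolynomial (Fin n × Fin n) ℝ,
      ∀ x : ↥K, eval (fun p => (x : Matrix (Fin n) (Fin n) ℝ) p.1 p.2) q = a x := by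
    intro a ha
    induction ha using Algebra.adjoin_induction with
    | mem u hu =>
      obtain ⟨v, rfl⟩ := hu
      exact ⟨X v, fun x => by simp [hc]⟩
    | algebraMap r => exact ⟨MvPolynomial.C r, fun x => by simp⟩
    | add u w _ _ hu hw =>
      obtain ⟨qu, hqu⟩ := hu; obtain ⟨qw, hqw⟩ := hw
      exact ⟨qu + qw, fun x => by simp [hqu x, hqw x]⟩
    | mul u w _ _ hu hw =>
      obtain ⟨qu, hqu⟩ := hu; obtain ⟨qw, hqw⟩ := hw
      exact ⟨qu * qw, fun x => by simp [hqu x, hqw x]⟩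
  obtain ⟨q, hq⟩ := hrep (g : C(↥K, ℝ)) g.2
  refine ⟨q, fun x hx => ?_⟩
  have := hg ⟨x, hx⟩
  rw [Real.norm_eq_abs] at this
  simpa [hq ⟨x, hx⟩] using this

end CGIA

open Matrix MvPolynomial MeasureTheory TopologicalSpace


set_option maxHeartbeats 2000000 in
theorem compact_group_is_algebraic {n : ℕ}
    (G : Set (Matrix (Fin n) (Fin n) ℝ))
    (hcompact : IsCompact G)
    (hone : 1 ∈ G)
    (hmul : ∀ a ∈ G, ∀ b ∈ G, a * b ∈ G)
    (hinv : ∀ X ∈ G, IsUnit X ∧ X⁻¹ ∈ G) :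
    G = {M : Matrix (Fin n) (Fin n) ℝ |
          ∀ f : MvPolynomial (Fin n × Fin n) ℝ,
            (MvPolynomial.eval (fun p => (1 : Matrix (Fin n) (Fin n) ℝ) p.1 p.2) f = 0 ∧
             ∀ g ∈ G, ∀ Y : Matrix (Fin n) (Fin n) ℝ,
               MvPolynomial.eval (fun p => (g * Y) p.1 p.2) f
                 = MvPolynomial.eval (fun p => Y p.1 p.2) f) →
            MvPolynomial.eval (fun p => M p.1 p.2) f = 0} := by
  apply Set.Subset.antisymm
  · intro M hM
    intro f hf
    obtain ⟨hf1, hf2⟩ := hf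
    have h := hf2 M hM 1
    rw [mul_one] at h
    rw [h]; exact hf1
  · intro M hM
    rw [Set.mem_setOf_eq] at hM
    by_contra hMG
    -- instances on the subtype group
    letI : Group ↥G := CGIA.grp G hone hmul hinv
    haveI : IsTopologicalGroup ↥G := CGIA.topGrp G hone hmul hinv
    haveI : CompactSpace ↥G := isCompact_iff_compactSpace.mp hcompact
    haveI : Nonempty ↥G := ⟨⟨1, hone⟩⟩
    letI : MeasurableSpace ↥G := borel ↥G
    haveI : BorelSpace ↥G := ⟨rfl⟩
    set μ : Measure ↥G := Measure.haarMeasure (⊤ : PositiveCompacts ↥G) with hμ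
    haveI hprob : IsProbabilityMeasure μ := by
      constructor
      have h := Measure.haarMeasure_self (K₀ := (⊤ : PositiveCompacts ↥G))
      rwa [PositiveCompacts.coe_top] at h
    haveI hlinv : μ.IsMulLeftInvariant := by
      rw [hμ]; infer_instance
    -- separating continuous function
    set GM : Set (Matrix (Fin n) (Fin n) ℝ) := (fun A => A * M) '' G with hGM
    have hGMcompact : IsCompact GM := hcompact.image (continuous_id.matrix_mul continuous_const)
    have hdisj : Disjoint G GM := by
      rw [Set.disjoint_left]
      rintro a haG ⟨g, hgG, rfl⟩
      apply hMG
      have h1 : g⁻¹ ∈ G := (hinv g hgG).2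
      have h2 : g⁻¹ * (g * M) ∈ G := hmul _ h1 _ haG
      rwa [← mul_assoc,
        Matrix.nonsing_inv_mul g ((Matrix.isUnit_iff_isUnit_det g).mp (hinv g hgG).1),
        one_mul] at h2
    haveI : NormalSpace (Matrix (Fin n) (Fin n) ℝ) :=
      inferInstanceAs (NormalSpace (Fin n → Fin n → ℝ))
    obtain ⟨φ, hφ0, hφ1, hφicc⟩ :=
      exists_continuous_zero_one_of_isClosed hcompact.isClosed hGMcompact.isClosed hdisj
    obtain ⟨f₀, hf₀⟩ := CGIA.exists_poly_approx (G ∪ GM) (hcompact.union hGMcompact) φ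
      (1/4) (by norm_num)
    have hf₀G : ∀ x ∈ G, |MvPolynomial.eval (fun p => x p.1 p.2) f₀| < 1/4 := by
      intro x hx
      have h := hf₀ x (Or.inl hx)
      have h0 : φ x = 0 := hφ0 hx
      rwa [h0, sub_zero] at h
    have hf₀GM : ∀ x ∈ GM, (3/4 : ℝ) < MvPolynomial.eval (fun p => x p.1 p.2) f₀ := by
      intro x hx
      have h := hf₀ x (Or.inr hx)
      have h1 : φ x = 1 := hφ1 hx
      rw [h1] at h
      have := abs_lt.mp h
      linarith [this.1]
    -- the averaged polynomial
    set Ψ : ↥G → MvPolynomial (Fin n × Fin n) ℝ :=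
      fun g => bind₁ (CGIA.L ((g : Matrix (Fin n) (Fin n) ℝ))⁻¹) f₀ with hΨ
    have hΨeval : ∀ (g : ↥G) (X : Matrix (Fin n) (Fin n) ℝ),
        MvPolynomial.eval (fun p => X p.1 p.2) (Ψ g)
          = MvPolynomial.eval (fun p => (((g : Matrix (Fin n) (Fin n) ℝ))⁻¹ * X) p.1 p.2) f₀ :=
      fun g X => CGIA.eval_bind_L _ _ _
    set d := f₀.totalDegree with hd
    set D : (Fin n × Fin n) →₀ ℕ := Finsupp.equivFunOnFinite.symm (fun _ => d) with hD
    set T : Finset ((Fin n × Fin n) →₀ ℕ) := Finset.Iic D with hT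
    have hsupp : ∀ g : ↥G, (Ψ g).support ⊆ T := by
      intro g m hm
      rw [hT, Finset.mem_Iic, Finsupp.le_def]
      intro v
      have h1 : m v ≤ m.sum fun _ e => e := by
        by_cases hv : v ∈ m.support
        · exact Finset.single_le_sum (fun _ _ => Nat.zero_le _) hv
        · simp [Finsupp.notMem_support_iff.mp hv]
      have h2 : (m.sum fun _ e => e) ≤ (Ψ g).totalDegree := le_totalDegree hm
      have h3 : (Ψ g).totalDegree ≤ d := CGIA.totalDegree_bind_L_le _ f₀
      have : D v = d := rfl
      omega
    have hcont : ∀ m, Continuous fun g : ↥G => coeff m (Ψ g) := by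
      intro m
      exact (CGIA.continuous_coeff_bind f₀ m).comp (CGIA.continuous_inv_coe G hinv)
    have hint : ∀ m, Integrable (fun g : ↥G => coeff m (Ψ g)) μ := fun m =>
      (hcont m).integrable_of_hasCompactSupport (HasCompactSupport.of_compactSpace _)
    set F : MvPolynomial (Fin n × Fin n) ℝ :=
      ∑ m ∈ T, monomial m (∫ g, coeff m (Ψ g) ∂μ) with hF
    have hevalsum : ∀ (X : Matrix (Fin n) (Fin n) ℝ) (g : ↥G),
        MvPolynomial.eval (fun p => X p.1 p.2) (Ψ g)
          = ∑ m ∈ T, coeff m (Ψ g) * ∏ v, X v.1 v.2 ^ m v := by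
      intro X g
      rw [eval_eq']
      exact Finset.sum_subset (hsupp g) fun m _ hm => by
        rw [MvPolynomial.notMem_support_iff.mp hm, zero_mul]
    have hintEval : ∀ X : Matrix (Fin n) (Fin n) ℝ,
        Integrable (fun g : ↥G => MvPolynomial.eval (fun p => X p.1 p.2) (Ψ g)) μ := by
      intro X
      have hrw : (fun g : ↥G => MvPolynomial.eval (fun p => X p.1 p.2) (Ψ g))
          = fun g => ∑ m ∈ T, coeff m (Ψ g) * ∏ v, X v.1 v.2 ^ m v := by
        funext g; exact hevalsum X g
      rw [hrw]
      exact integrable_finset_sum _ fun m _ => (hint m).mul_const _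
    have hFeval : ∀ X : Matrix (Fin n) (Fin n) ℝ,
        MvPolynomial.eval (fun p => X p.1 p.2) F
          = ∫ g, MvPolynomial.eval (fun p => X p.1 p.2) (Ψ g) ∂μ := by
      intro X
      have h1 : MvPolynomial.eval (fun p => X p.1 p.2) F
          = ∑ m ∈ T, (∫ g, coeff m (Ψ g) ∂μ) * ∏ v, X v.1 v.2 ^ m v := by
        rw [hF, map_sum]
        refine Finset.sum_congr rfl fun m _ => ?_
        rw [eval_monomial, Finsupp.prod_pow]
      rw [h1]
      have h2 : ∀ m ∈ T, (∫ g, coeff m (Ψ g) ∂μ) * ∏ v, X v.1 v.2 ^ m v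
          = ∫ g, coeff m (Ψ g) * ∏ v, X v.1 v.2 ^ m v ∂μ := fun m _ =>
        (integral_mul_const _ _).symm
      rw [Finset.sum_congr rfl h2,
        ← integral_finset_sum _ (fun m _ => (hint m).mul_const _)]
      refine integral_congr_ae (Filter.Eventually.of_forall fun g => ?_)
      exact (hevalsum X g).symm
    -- invariance of F
    have hFinv : ∀ h ∈ G, ∀ Y : Matrix (Fin n) (Fin n) ℝ,
        MvPolynomial.eval (fun p => (h * Y) p.1 p.2) F
          = MvPolynomial.eval (fun p => Y p.1 p.2) F := by
      intro h hh Y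
      rw [hFeval, hFeval]
      set hG : ↥G := ⟨h, hh⟩ with hhG
      have key : ∀ g : ↥G, MvPolynomial.eval (fun p => (h * Y) p.1 p.2) (Ψ g)
          = MvPolynomial.eval (fun p => Y p.1 p.2) (Ψ (hG⁻¹ * g)) := by
        intro g
        rw [hΨeval, hΨeval]
        have hcoe : ((hG⁻¹ * g : ↥G) : Matrix (Fin n) (Fin n) ℝ) = h⁻¹ * (g : Matrix (Fin n) (Fin n) ℝ) := rfl
        have hinvinv : (h⁻¹)⁻¹ = h := Matrix.nonsing_inv_nonsing_inv h
          ((Matrix.isUnit_iff_isUnit_det h).mp (hinv h hh).1)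
        have hmat : ((hG⁻¹ * g : ↥G) : Matrix (Fin n) (Fin n) ℝ)⁻¹ * Y
            = ((g : Matrix (Fin n) (Fin n) ℝ))⁻¹ * (h * Y) := by
          rw [hcoe, Matrix.mul_inv_rev, hinvinv, mul_assoc]
        rw [hmat]
      calc ∫ g, MvPolynomial.eval (fun p => (h * Y) p.1 p.2) (Ψ g) ∂μ
          = ∫ g, MvPolynomial.eval (fun p => Y p.1 p.2) (Ψ (hG⁻¹ * g)) ∂μ := by
            exact integral_congr_ae (Filter.Eventually.of_forall key)
        _ = ∫ g, MvPolynomial.eval (fun p => Y p.1 p.2) (Ψ g) ∂μ :=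
            integral_mul_left_eq_self (fun g => MvPolynomial.eval (fun p => Y p.1 p.2) (Ψ g)) hG⁻¹
    -- bounds
    have hb1 : MvPolynomial.eval (fun p => (1 : Matrix (Fin n) (Fin n) ℝ) p.1 p.2) F ≤ 1/4 := by
      rw [hFeval]
      have hle : ∀ g : ↥G,
          MvPolynomial.eval (fun p => (1 : Matrix (Fin n) (Fin n) ℝ) p.1 p.2) (Ψ g) ≤ 1/4 := by
        intro g
        rw [hΨeval, mul_one]
        exact le_of_lt (abs_lt.mp (hf₀G _ (hinv _ g.2).2)).2
      calc ∫ g, MvPolynomial.eval (fun p => (1 : Matrix (Fin n) (Fin n) ℝ) p.1 p.2) (Ψ g) ∂μ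
          ≤ ∫ _g : ↥G, (1/4 : ℝ) ∂μ := integral_mono (hintEval 1) (integrable_const _) hle
        _ = 1/4 := by simp
    have hb2 : (3/4 : ℝ) ≤ MvPolynomial.eval (fun p => M p.1 p.2) F := by
      rw [hFeval]
      have hle : ∀ g : ↥G, (3/4 : ℝ) ≤ MvPolynomial.eval (fun p => M p.1 p.2) (Ψ g) := by
        intro g
        rw [hΨeval]
        exact le_of_lt (hf₀GM _ ⟨((g : Matrix (Fin n) (Fin n) ℝ))⁻¹, (hinv _ g.2).2, rfl⟩)
      calc (3/4 : ℝ) = ∫ _g : ↥G, (3/4 : ℝ) ∂μ := by simp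
        _ ≤ ∫ g, MvPolynomial.eval (fun p => M p.1 p.2) (Ψ g) ∂μ :=
            integral_mono (integrable_const _) (hintEval M) hle
    -- conclude
    set c : ℝ := MvPolynomial.eval (fun p => (1 : Matrix (Fin n) (Fin n) ℝ) p.1 p.2) F with hc
    have hfin := hM (F - MvPolynomial.C c)
    rw [map_sub, map_sub, eval_C] at hfin
    have h0 : MvPolynomial.eval (fun p => (1 : Matrix (Fin n) (Fin n) ℝ) p.1 p.2) F - c = 0 := by
      rw [hc, sub_self]
    have hinvcond : ∀ g ∈ G, ∀ Y : Matrix (Fin n) (Fin n) ℝ,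
        MvPolynomial.eval (fun p => (g * Y) p.1 p.2) (F - MvPolynomial.C c)
          = MvPolynomial.eval (fun p => Y p.1 p.2) (F - MvPolynomial.C c) := by
      intro g hg Y
      rw [map_sub, map_sub, eval_C, eval_C, hFinv g hg Y]
    have hend := hfin ⟨h0, hinvcond⟩
    rw [eval_C] at hend
    linarith
end

section
/- Let t = (3,0,4), let X_a, X_b be the rational rotation matrices (1/5)[[3,-4,0],[4,3,0],[0,0,5]] and (1/5)[[5,0,0],[0,3,-4],[0,4,3]], and let (u_i, v_i), 1 ≤ i ≤ k, be pairs of words over {a,b}. Define the 6×6 matrices Y_i = (1/2)[[X_{u_i}+X_{v_i}, X_{u_i}−X_{v_i}],[X_{u_i}−X_{v_i}, X_{u_i}+X_{v_i}]], y = (t, 0, 0, 0), and P = diag(0_3, I_3). Then for every nonempty word w over {1,...,k}: ‖y Y_w P‖² = 0 if and only if u_w = v_w (i.e., w is a solution of the Post correspondence instance). -/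
open Matrix

namespace PCPaux


/-- Integer step: `5 * (vector · rotation)` for appending one letter. -/
def stepZ (c : Bool) (p : ℤ × ℤ × ℤ) : ℤ × ℤ × ℤ :=
  if c then (3*p.1 + 4*p.2.1, -4*p.1 + 3*p.2.1, 5*p.2.2)
  else (5*p.1, 3*p.2.1 + 4*p.2.2, -4*p.2.1 + 3*p.2.2)

/-- `FZ s = 5 ^ s.length • (3,0,4) · X_s` as an integer vector. -/
def FZ (s : List Bool) : ℤ × ℤ × ℤ := s.foldl (fun p c => stepZ c p) (3, 0, 4)

lemma FZ_nil : FZ [] = (3, 0, 4) := rfl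

lemma FZ_concat (s : List Bool) (c : Bool) : FZ (s ++ [c]) = stepZ c (FZ s) :=
  List.foldl_concat _ _ _ _

def stepM (c : Bool) (p : ZMod 5 × ZMod 5 × ZMod 5) : ZMod 5 × ZMod 5 × ZMod 5 :=
  if c then (3*p.1 + 4*p.2.1, -4*p.1 + 3*p.2.1, 5*p.2.2)
  else (5*p.1, 3*p.2.1 + 4*p.2.2, -4*p.2.1 + 3*p.2.2)

def castT (p : ℤ × ℤ × ℤ) : ZMod 5 × ZMod 5 × ZMod 5 :=
  ((p.1 : ZMod 5), (p.2.1 : ZMod 5), (p.2.2 : ZMod 5))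

def HM (s : List Bool) : ZMod 5 × ZMod 5 × ZMod 5 :=
  s.foldl (fun p c => stepM c p) (3, 0, 4)

lemma HM_concat (s : List Bool) (c : Bool) : HM (s ++ [c]) = stepM c (HM s) :=
  List.foldl_concat _ _ _ _

lemma castT_stepZ (c : Bool) (p : ℤ × ℤ × ℤ) : castT (stepZ c p) = stepM c (castT p) := by
  cases c <;> simp [stepZ, stepM, castT] <;> push_cast <;> simp

lemma HM_eq (s : List Bool) : HM s = castT (FZ s) := by
  induction s using List.reverseRecOn with
  | nil => decide
  | append_singleton s c ih => rw [HM_concat, FZ_concat, castT_stepZ, ih]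

def good (c : Bool) (q : ZMod 5 × ZMod 5 × ZMod 5) : Prop :=
  if c then q = (4, 3, 0) ∨ q = (1, 2, 0) else q = (0, 1, 2) ∨ q = (0, 4, 3)

lemma inv (s : List Bool) (c : Bool) : good c (HM (s ++ [c])) := by
  induction s using List.reverseRecOn generalizing c with
  | nil => cases c <;> simp only [good, HM, if_true, if_false] <;> decide
  | append_singleton s c' ih =>
    have h := ih c'
    rw [HM_concat]
    cases c <;> cases c' <;> unfold good at h ⊢ <;>
      rcases h with h | h <;> rw [h] <;> decide

lemma mid_ne (s : List Bool) (c : Bool) : (HM (s ++ [c])).2.1 ≠ 0 := by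
  have h := inv s c
  cases c <;> unfold good at h <;> rcases h with h | h <;> rw [h] <;> decide

lemma len_eq {a b : ℕ} {y y' : ℤ} (hy : (y : ZMod 5) ≠ 0) (hy' : (y' : ZMod 5) ≠ 0)
    (h : 5 ^ b * y = 5 ^ a * y') : a = b := by
  rcases lt_trichotomy a b with hab | hab | hab
  · exfalso
    apply hy'
    have h5 : (5 : ℤ) ^ a ≠ 0 := by positivity
    have hb : (5 : ℤ) ^ b = 5 ^ a * 5 ^ (b - a) := by
      rw [← pow_add]; congr 1; omega
    have hyy : y' = 5 ^ (b - a) * y := by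
      apply mul_left_cancel₀ h5; rw [← h, hb]; ring
    have : (y' : ZMod 5) = ((5 : ℤ) ^ (b - a) * y : ℤ) := by exact_mod_cast congrArg _ hyy
    rw [this]
    push_cast
    have h50 : (5 : ZMod 5) = 0 := by decide
    rw [h50, zero_pow (by omega : b - a ≠ 0), zero_mul]
  · exact hab
  · exfalso
    apply hy
    have h5 : (5 : ℤ) ^ b ≠ 0 := by positivity
    have hb : (5 : ℤ) ^ a = 5 ^ b * 5 ^ (a - b) := by
      rw [← pow_add]; congr 1; omega
    have hyy : y = 5 ^ (a - b) * y' := by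
      apply mul_left_cancel₀ h5; rw [h, hb]; ring
    have : (y : ZMod 5) = ((5 : ℤ) ^ (a - b) * y' : ℤ) := by exact_mod_cast congrArg _ hyy
    rw [this]
    push_cast
    have h50 : (5 : ZMod 5) = 0 := by decide
    rw [h50, zero_pow (by omega : a - b ≠ 0), zero_mul]

lemma FZ_inj : ∀ (n : ℕ) (U V : List Bool), U.length + V.length ≤ n →
    5 ^ V.length * (FZ U).1 = 5 ^ U.length * (FZ V).1 →
    5 ^ V.length * (FZ U).2.1 = 5 ^ U.length * (FZ V).2.1 →
    5 ^ V.length * (FZ U).2.2 = 5 ^ U.length * (FZ V).2.2 →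
    U = V := by
  intro n
  induction n with
  | zero =>
    intro U V hlen _ _ _
    have hU : U = [] := List.eq_nil_of_length_eq_zero (by omega)
    have hV : V = [] := List.eq_nil_of_length_eq_zero (by omega)
    rw [hU, hV]
  | succ n ih =>
    intro U V hlen h1 h2 h3
    rcases U.eq_nil_or_concat' with rfl | ⟨U', c, rfl⟩
    · rcases V.eq_nil_or_concat' with rfl | ⟨V', d, rfl⟩
      · rfl
      · exfalso
        apply mid_ne V' d
        rw [HM_eq]
        have : (FZ (V' ++ [d])).2.1 = 0 := by
          have := h2
          rw [FZ_nil] at this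
          simp at this
          omega
        simp [castT, this]
    · rcases V.eq_nil_or_concat' with rfl | ⟨V', d, rfl⟩
      · exfalso
        apply mid_ne U' c
        rw [HM_eq]
        have : (FZ (U' ++ [c])).2.1 = 0 := by
          have := h2
          rw [FZ_nil] at this
          simp at this
          omega
        simp [castT, this]
      · by_cases hcd : c = d
        · subst hcd
          have hUl : (U' ++ [c]).length = U'.length + 1 := by simp
          have hVl : (V' ++ [c]).length = V'.length + 1 := by simp
          rw [hUl, hVl, FZ_concat, FZ_concat] at h1 h2 h3
          have hext : U' = V' := by
            apply ih U' V' (by simp at hlen ⊢; omega)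
            · cases c <;> simp [stepZ] at h1 h2 h3
              · -- b : new = (5x, 3y+4z, -4y+3z)
                apply mul_left_cancel₀ (by norm_num : (25:ℤ) ≠ 0)
                linear_combination h1
              · apply mul_left_cancel₀ (by norm_num : (125:ℤ) ≠ 0)
                linear_combination (3:ℤ) * h1 - 4 * h2
            · cases c <;> simp [stepZ] at h1 h2 h3
              · apply mul_left_cancel₀ (by norm_num : (125:ℤ) ≠ 0)
                linear_combination (3:ℤ) * h2 - 4 * h3
              · apply mul_left_cancel₀ (by norm_num : (125:ℤ) ≠ 0)
                linear_combination (4:ℤ) * h1 + 3 * h2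
            · cases c <;> simp [stepZ] at h1 h2 h3
              · apply mul_left_cancel₀ (by norm_num : (125:ℤ) ≠ 0)
                linear_combination (4:ℤ) * h2 + 3 * h3
              · apply mul_left_cancel₀ (by norm_num : (25:ℤ) ≠ 0)
                linear_combination h3
          rw [hext]
        · exfalso
          have hU := inv U' c
          have hV := inv V' d
          have hyU : ((FZ (U' ++ [c])).2.1 : ZMod 5) ≠ 0 := by
            have := mid_ne U' c; rwa [HM_eq] at this
          have hyV : ((FZ (V' ++ [d])).2.1 : ZMod 5) ≠ 0 := by
            have := mid_ne V' d; rwa [HM_eq] at this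
          have hlen2 : (U' ++ [c]).length = (V' ++ [d]).length := len_eq hyU hyV h2
          have hz : (FZ (U' ++ [c])).2.2 = (FZ (V' ++ [d])).2.2 := by
            rw [hlen2] at h3
            exact mul_left_cancel₀ (by positivity) h3
          have hzc : (HM (U' ++ [c])).2.2 = (HM (V' ++ [d])).2.2 := by
            rw [HM_eq, HM_eq, castT, castT]
            simp [hz]
          cases c <;> cases d <;> try exact hcd rfl
          all_goals (
            unfold good at hU hV
            simp at hU hV
            rcases hU with hU | hU <;> rcases hV with hV | hV <;>
              rw [hU, hV] at hzc <;> simp at hzc <;> exact absurd hzc (by decide))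


def XwD (Xa Xb : Matrix (Fin 3) (Fin 3) ℝ) (s : List Bool) : Matrix (Fin 3) (Fin 3) ℝ :=
  (s.map (fun c => if c then Xa else Xb)).prod

def toV (p : ℤ × ℤ × ℤ) : Fin 3 → ℝ := ![(p.1 : ℝ), (p.2.1 : ℝ), (p.2.2 : ℝ)]

lemma XwD_append (Xa Xb : Matrix (Fin 3) (Fin 3) ℝ) (s t : List Bool) :
    XwD Xa Xb (s ++ t) = XwD Xa Xb s * XwD Xa Xb t := by
  simp [XwD]

variable {Xa Xb : Matrix (Fin 3) (Fin 3) ℝ}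
  (hXa : Xa = (1/5 : ℝ) • !![3, -4, 0; 4, 3, 0; 0, 0, 5])
  (hXb : Xb = (1/5 : ℝ) • !![5, 0, 0; 0, 3, -4; 0, 4, 3])

include hXa hXb in
lemma vec_rel : ∀ s : List Bool,
    (5:ℝ) ^ s.length • (![3, 0, 4] ᵥ* XwD Xa Xb s) = toV (FZ s) := by
  intro s
  induction s using List.reverseRecOn with
  | nil =>
    funext i
    fin_cases i <;> simp [XwD, toV, FZ]
  | append_singleton s c ih =>
    have hM : XwD Xa Xb (s ++ [c]) = XwD Xa Xb s * (if c then Xa else Xb) := by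
      rw [XwD_append]; simp [XwD]
    rw [hM, ← vecMul_vecMul]
    have hl : (s ++ [c]).length = s.length + 1 := by simp
    rw [hl, pow_succ, mul_comm, mul_smul, ← smul_vecMul, ih, FZ_concat]
    cases c <;> funext i <;> fin_cases i <;>
      simp [hXa, hXb, vecMul, dotProduct, Fin.sum_univ_three, toV, stepZ] <;>
      push_cast <;> ring

include hXa hXb in
lemma tX_inj (U V : List Bool)
    (h : ![3, 0, 4] ᵥ* XwD Xa Xb U = ![3, 0, 4] ᵥ* XwD Xa Xb V) : U = V := by
  have hU := vec_rel hXa hXb U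
  have hV := vec_rel hXa hXb V
  have key : (5:ℝ) ^ V.length • toV (FZ U) = (5:ℝ) ^ U.length • toV (FZ V) := by
    rw [← hU, ← hV, h, smul_comm]
  apply FZ_inj (U.length + V.length) U V le_rfl
  · have := congrFun key 0
    simp [toV] at this
    exact_mod_cast this
  · have := congrFun key 1
    simp [toV] at this
    exact_mod_cast this
  · have := congrFun key 2
    simp [toV] at this
    exact_mod_cast this


lemma vecMul_smulM {n m : Type*} [Fintype n] (c : ℝ) (x : n → ℝ) (M : Matrix n m ℝ) :
    x ᵥ* (c • M) = c • (x ᵥ* M) := by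
  funext j
  simp only [Matrix.vecMul, dotProduct, Matrix.smul_apply, Pi.smul_apply, smul_eq_mul,
    Finset.mul_sum]
  apply Finset.sum_congr rfl
  intros
  ring

end PCPaux

open PCPaux in
theorem pcp_reduction {k : ℕ}
    (Xa Xb : Matrix (Fin 3) (Fin 3) ℝ)
    (hXa : Xa = (1/5 : ℝ) • !![3, -4, 0; 4, 3, 0; 0, 0, 5])
    (hXb : Xb = (1/5 : ℝ) • !![5, 0, 0; 0, 3, -4; 0, 4, 3])
    -- the PCP instance: pairs of words over {a,b} (`true` = a, `false` = b)
    (u v : Fin k → List Bool) :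
    let Xw : List Bool → Matrix (Fin 3) (Fin 3) ℝ :=
      fun word => (word.map (fun c => if c then Xa else Xb)).prod
    let Y : Fin k → Matrix (Fin 3 ⊕ Fin 3) (Fin 3 ⊕ Fin 3) ℝ :=
      fun i => (1/2 : ℝ) • Matrix.fromBlocks
        (Xw (u i) + Xw (v i)) (Xw (u i) - Xw (v i))
        (Xw (u i) - Xw (v i)) (Xw (u i) + Xw (v i))
    let y : (Fin 3 ⊕ Fin 3) → ℝ := Sum.elim ![3, 0, 4] 0
    let P : Matrix (Fin 3 ⊕ Fin 3) (Fin 3 ⊕ Fin 3) ℝ := Matrix.fromBlocks 0 0 0 1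
    ∀ w : List (Fin k), w ≠ [] →
      ((∑ j, (Matrix.vecMul y ((w.map Y).prod * P) j) ^ 2 = 0) ↔
        (w.map u).flatten = (w.map v).flatten) := by
  intro Xw Y y P w hw
  have hXw : Xw = XwD Xa Xb := rfl
  set t : Fin 3 → ℝ := ![3, 0, 4] with ht
  -- single step through a block matrix
  have step1 : ∀ (i : Fin k) (a b : Fin 3 → ℝ),
      (Sum.elim (a + b) (a - b)) ᵥ* Y i
        = Sum.elim (a ᵥ* Xw (u i) + b ᵥ* Xw (v i)) (a ᵥ* Xw (u i) - b ᵥ* Xw (v i)) := by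
    intro i a b
    have hY : Y i = (1/2 : ℝ) • Matrix.fromBlocks
        (Xw (u i) + Xw (v i)) (Xw (u i) - Xw (v i))
        (Xw (u i) - Xw (v i)) (Xw (u i) + Xw (v i)) := rfl
    rw [hY, vecMul_smulM, vecMul_fromBlocks]
    funext j
    cases j with
    | inl j =>
      simp only [Pi.smul_apply, Sum.elim_inl, Sum.elim_comp_inl, Sum.elim_comp_inr,
        Matrix.vecMul_add, Matrix.vecMul_sub, Matrix.add_vecMul, Matrix.sub_vecMul,
        Pi.add_apply, Pi.sub_apply, smul_eq_mul]
      ring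
    | inr j =>
      simp only [Pi.smul_apply, Sum.elim_inr, Sum.elim_comp_inl, Sum.elim_comp_inr,
        Matrix.vecMul_add, Matrix.vecMul_sub, Matrix.add_vecMul, Matrix.sub_vecMul,
        Pi.add_apply, Pi.sub_apply, smul_eq_mul]
      ring
  -- iterated version
  have main : ∀ (W : List (Fin k)) (a b : Fin 3 → ℝ),
      (Sum.elim (a + b) (a - b)) ᵥ* (W.map Y).prod
        = Sum.elim (a ᵥ* Xw (W.map u).flatten + b ᵥ* Xw (W.map v).flatten)
            (a ᵥ* Xw (W.map u).flatten - b ᵥ* Xw (W.map v).flatten) := by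
    intro W
    induction W with
    | nil =>
      intro a b
      have h1 : Xw [] = 1 := rfl
      simp [h1]
    | cons i W ihW =>
      intro a b
      rw [List.map_cons, List.prod_cons, ← vecMul_vecMul, step1 i a b, ihW]
      have hu : Xw ((i :: W).map u).flatten = Xw (u i) * Xw (W.map u).flatten := by
        rw [List.map_cons, List.flatten_cons, hXw, XwD_append]
      have hv : Xw ((i :: W).map v).flatten = Xw (v i) * Xw (W.map v).flatten := by
        rw [List.map_cons, List.flatten_cons, hXw, XwD_append]
      rw [hu, hv, ← vecMul_vecMul, ← vecMul_vecMul]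
  set U := (w.map u).flatten with hU
  set V := (w.map v).flatten with hV
  set aw : Fin 3 → ℝ := t ᵥ* Xw U with haw
  set bw : Fin 3 → ℝ := t ᵥ* Xw V with hbw
  have hy : y = (1/2 : ℝ) • Sum.elim (t + t) (t - t) := by
    funext j
    cases j <;> simp [y] <;> ring
  have hprod : y ᵥ* ((w.map Y).prod * P)
      = Sum.elim (0 : Fin 3 → ℝ) ((1/2 : ℝ) • (aw - bw)) := by
    rw [← vecMul_vecMul, hy, smul_vecMul, main w t t]
    have hP : P = Matrix.fromBlocks 0 0 0 1 := rfl
    rw [smul_vecMul, hP, vecMul_fromBlocks]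
    funext j
    cases j with
    | inl j => simp
    | inr j => simp [aw, bw, U, V]
  rw [hprod]
  have hsum : (∑ j, (Sum.elim (0 : Fin 3 → ℝ) ((1/2 : ℝ) • (aw - bw)) j) ^ 2)
      = ∑ j : Fin 3, ((1/2 : ℝ) * (aw j - bw j)) ^ 2 := by
    rw [Fintype.sum_sum_type]
    simp
  rw [hsum]
  constructor
  · intro h
    have hz : ∀ j : Fin 3, ((1/2 : ℝ) * (aw j - bw j)) ^ 2 = 0 := by
      intro j
      have := (Finset.sum_eq_zero_iff_of_nonneg (fun j _ => sq_nonneg _)).mp h j (Finset.mem_univ j)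
      exact this
    have hab : aw = bw := by
      funext j
      have := hz j
      have h2 : (1/2 : ℝ) * (aw j - bw j) = 0 := by
        exact pow_eq_zero_iff (n := 2) (by norm_num) |>.mp this
      nlinarith [h2]
    exact tX_inj hXa hXb U V (by rw [← hXw]; exact hab)
  · intro h
    have : aw = bw := by rw [haw, hbw, h]
    rw [this]
    simp
end
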